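/- arXiv:2411.13974 — 3 statements merged into one kernel-verified Lean document; each statement's English description precedes it below -/
import Mathlib

section
/- The CRPS is a strictly proper scoring rule on P₁(ℝ): S̄(F,G) ≥ S̄(G,G) for all F, G ∈ P₁(ℝ), with equality if and only if F = G. -/
open MeasureTheory ProbabilityTheory

/-- The Continuous Ranked Probability Score of the predictive distribution `F`
(identified with its c.d.f.) at the observation `y`. -/
noncomputable def crps (F : Measure ℝ) (y : ℝ) : ℝ :=
  ∫ z, ((if y ≤ z then (1 : ℝ) else 0) - cdf F z) ^ 2

/-- The expected CRPS `S̄(F,G) = E_{Y ∼ G}[S(F,Y)]`. -/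
noncomputable def crpsBar (F G : Measure ℝ) : ℝ :=
  ∫ y, crps F y ∂G

/-! By Fubini, `S̄(F,G) = ∫ (F z - G z)² + G z (1 - G z) dz`: for fixed `z`, the indicator
`𝟙{Y ≤ z}` with `Y ∼ G` has mean `G z` and variance `G z (1 - G z)`. Hence
`S̄(F,G) - S̄(G,G) = ∫ (F - G)²`, which vanishes only if the right-continuous functions `F` and `G`
agree almost everywhere, hence everywhere. All these integrals are finite because
`∫ |𝟙{y ≤ z} - F z| dz = E_F |X - y|`.

In lemma names, `step` stands for the Heaviside function `z ↦ if y ≤ z then 1 else 0`. -/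

open Set Filter Topology

theorem StieltjesFunction.eq_of_ae_eq {f g : StieltjesFunction ℝ} (h : ∀ᵐ x, f x = g x) :
    f = g := by
  ext x
  set S := Ioi x ∩ {z | f z = g z}
  have hx : x ∈ closure S := by
    have := closure_mono ((Measure.dense_of_ae h).open_subset_closure_inter (isOpen_Ioi (a := x)))
    rw [closure_closure, closure_Ioi] at this
    exact this self_mem_Ici
  have : (𝓝[S] x).NeBot := mem_closure_iff_nhdsWithin_neBot.1 hx
  have hS : S ⊆ Ici x := fun _ hz => mem_Ici.2 (le_of_lt hz.1)
  refine tendsto_nhds_unique ((f.right_continuous x).mono_left (nhdsWithin_mono x hS)) ?_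
  refine ((g.right_continuous x).mono_left (nhdsWithin_mono x hS)).congr' ?_
  filter_upwards [self_mem_nhdsWithin] with z hz using hz.2.symm

@[fun_prop]
theorem Measurable.ite_le {α β γ : Type*} [MeasurableSpace α] [TopologicalSpace β]
    [MeasurableSpace β] [OpensMeasurableSpace β] [LinearOrder β] [OrderClosedTopology β]
    [SecondCountableTopology β] [MeasurableSpace γ] {f g : α → β} {c d : γ}
    (hf : Measurable f) (hg : Measurable g) :
    Measurable fun a => if f a ≤ g a then c else d :=
  Measurable.ite (measurableSet_le hf hg) measurable_const measurable_const

namespace ProbabilityTheory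

@[fun_prop]
theorem measurable_cdf (μ : Measure ℝ) : Measurable (cdf μ) :=
  (monotone_cdf μ).measurable

theorem lintegral_enorm_step_sub_step (x y : ℝ) :
    ∫⁻ z, ‖(if y ≤ z then (1 : ℝ) else 0) - if x ≤ z then 1 else 0‖ₑ = ‖x - y‖ₑ := by
  wlog hxy : x ≤ y generalizing x y
  · rw [enorm_sub_rev, ← this y x (le_of_not_ge hxy)]
    refine lintegral_congr fun z => ?_
    rw [enorm_sub_rev]
  have hind : ∀ z, ‖(if y ≤ z then (1 : ℝ) else 0) - if x ≤ z then 1 else 0‖ₑ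
      = (Ico x y).indicator 1 z := by
    intro z
    by_cases hyz : y ≤ z
    · simp [hyz, hxy.trans hyz, not_lt.2 hyz]
    · by_cases hxz : x ≤ z
      · simp [indicator, hyz, hxz, not_le.1 hyz]
      · simp [indicator, hyz, hxz]
  rw [lintegral_congr hind, lintegral_indicator_one measurableSet_Ico, Real.volume_Ico,
    Real.enorm_eq_ofReal_abs, abs_sub_comm, abs_of_nonneg (sub_nonneg.2 hxy)]

variable (μ : Measure ℝ) [IsProbabilityMeasure μ]

theorem ofReal_one_sub_cdf (x : ℝ) : ENNReal.ofReal (1 - cdf μ x) = μ (Ioi x) := by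
  rw [← compl_Iic, prob_compl_eq_one_sub measurableSet_Iic, ← ofReal_cdf,
    ENNReal.ofReal_sub _ (cdf_nonneg μ x), ENNReal.ofReal_one]

theorem enorm_step_sub_cdf (y z : ℝ) :
    ‖(if y ≤ z then (1 : ℝ) else 0) - cdf μ z‖ₑ
      = ∫⁻ x, ‖(if y ≤ z then (1 : ℝ) else 0) - if x ≤ z then 1 else 0‖ₑ ∂μ := by
  by_cases hyz : y ≤ z
  · have : ∀ x, ‖(1 : ℝ) - if x ≤ z then 1 else 0‖ₑ = (Ioi z).indicator 1 x := by
      intro x; by_cases hxz : x ≤ z <;> simp [indicator, hxz]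
    simp_rw [if_pos hyz, this, lintegral_indicator_one measurableSet_Ioi, ← ofReal_one_sub_cdf,
      Real.enorm_eq_ofReal_abs, abs_of_nonneg (sub_nonneg.2 (cdf_le_one μ z))]
  · have : ∀ x, ‖(0 : ℝ) - if x ≤ z then 1 else 0‖ₑ = (Iic z).indicator 1 x := by
      intro x; by_cases hxz : x ≤ z <;> simp [indicator, hxz]
    simp_rw [if_neg hyz, this, lintegral_indicator_one measurableSet_Iic, ← ofReal_cdf,
      zero_sub, enorm_neg, Real.enorm_eq_ofReal_abs, abs_of_nonneg (cdf_nonneg μ z)]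

theorem lintegral_enorm_step_sub_cdf (y : ℝ) :
    ∫⁻ z, ‖(if y ≤ z then (1 : ℝ) else 0) - cdf μ z‖ₑ = ∫⁻ x, ‖x - y‖ₑ ∂μ := by
  simp_rw [enorm_step_sub_cdf μ y]
  rw [lintegral_lintegral_swap (by fun_prop)]
  simp_rw [lintegral_enorm_step_sub_step]

theorem integrable_step_sub_cdf (hμ : Integrable id μ) (y : ℝ) :
    Integrable fun z => (if y ≤ z then (1 : ℝ) else 0) - cdf μ z := by
  refine ⟨by fun_prop, ?_⟩
  rw [hasFiniteIntegral_iff_enorm, lintegral_enorm_step_sub_cdf]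
  exact (hμ.sub (integrable_const y)).hasFiniteIntegral

theorem lintegral_ofReal_sq_step_sub (z p : ℝ) :
    ∫⁻ y, ENNReal.ofReal (((if y ≤ z then (1 : ℝ) else 0) - p) ^ 2) ∂μ
      = ENNReal.ofReal ((p - cdf μ z) ^ 2 + cdf μ z * (1 - cdf μ z)) := by
  have hstep : ∀ y, ((if y ≤ z then (1 : ℝ) else 0) - p) ^ 2
      = p ^ 2 + (1 - 2 * p) * (Iic z).indicator 1 y := by
    intro y
    by_cases hyz : y ≤ z <;> simp [hyz]
    ring
  have hind : Integrable (fun y => (1 - 2 * p) * (Iic z).indicator 1 y) μ :=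
    ((integrable_const 1).indicator measurableSet_Iic).const_mul _
  rw [← ofReal_integral_eq_lintegral_ofReal
    (by simp_rw [hstep]; exact (integrable_const _).add hind) (ae_of_all _ fun _ => sq_nonneg _)]
  simp_rw [hstep]
  rw [integral_add (integrable_const _) hind, integral_const, integral_const_mul,
    integral_indicator_one measurableSet_Iic, ← cdf_eq_real]
  congr 1
  simp
  ring

theorem lintegral_lintegral_sq_step_sub_cdf (F : Measure ℝ) :
    ∫⁻ y, (∫⁻ z, ENNReal.ofReal (((if y ≤ z then (1 : ℝ) else 0) - cdf F z) ^ 2)) ∂μ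
      = ∫⁻ z, ENNReal.ofReal ((cdf F z - cdf μ z) ^ 2 + cdf μ z * (1 - cdf μ z)) := by
  rw [lintegral_lintegral_swap (by fun_prop)]
  exact lintegral_congr fun z => lintegral_ofReal_sq_step_sub μ z (cdf F z)

end ProbabilityTheory

section

variable (F G : Measure ℝ) [IsProbabilityMeasure F] [IsProbabilityMeasure G]

theorem integrable_sq_cdf_sub_cdf_add (hF : Integrable id F) (hG : Integrable id G) :
    Integrable fun z => (cdf F z - cdf G z) ^ 2 + cdf G z * (1 - cdf G z) := by
  -- with `H` the step at `0`: `(F - G)² + G (1 - G) ≤ |H - F| + 2 |H - G|`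
  refine ((integrable_step_sub_cdf F hF 0).norm.add
    ((integrable_step_sub_cdf G hG 0).norm.const_mul 2)).mono' (by fun_prop)
    (ae_of_all _ fun z => ?_)
  have := cdf_nonneg F z
  have := cdf_le_one F z
  have := cdf_nonneg G z
  have := cdf_le_one G z
  rw [Real.norm_of_nonneg (by nlinarith), Pi.add_apply]
  split_ifs
  · simp only [Real.norm_eq_abs, abs_of_nonneg (sub_nonneg.2 (cdf_le_one _ _))]
    nlinarith
  · simp only [Real.norm_eq_abs, zero_sub, abs_neg, abs_of_nonneg (cdf_nonneg _ _)]
    nlinarith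

theorem crpsBar_eq_integral (hF : Integrable id F) (hG : Integrable id G) :
    crpsBar F G = ∫ z, (cdf F z - cdf G z) ^ 2 + cdf G z * (1 - cdf G z) := by
  have hcrps : ∀ y, crps F y
      = (∫⁻ z, ENNReal.ofReal (((if y ≤ z then (1 : ℝ) else 0) - cdf F z) ^ 2)).toReal :=
    fun y => integral_eq_lintegral_of_nonneg_ae (ae_of_all _ fun _ => sq_nonneg _)
      (by fun_prop)
  have hnonneg : 0 ≤ᵐ[volume] fun z => (cdf F z - cdf G z) ^ 2 + cdf G z * (1 - cdf G z) :=
    ae_of_all _ fun z =>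
      add_nonneg (sq_nonneg _) (mul_nonneg (cdf_nonneg G z) (sub_nonneg.2 (cdf_le_one G z)))
  have hfin := (integrable_sq_cdf_sub_cdf_add F G hF hG).2
  rw [hasFiniteIntegral_iff_ofReal hnonneg, ← lintegral_lintegral_sq_step_sub_cdf] at hfin
  rw [crpsBar, funext hcrps, integral_toReal (by fun_prop) (ae_lt_top' (by fun_prop) hfin.ne),
    lintegral_lintegral_sq_step_sub_cdf, integral_eq_lintegral_of_nonneg_ae hnonneg (by fun_prop)]

theorem integrable_sq_cdf_sub_cdf (hF : Integrable id F) (hG : Integrable id G) :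
    Integrable fun z => (cdf F z - cdf G z) ^ 2 := by
  refine ((integrable_sq_cdf_sub_cdf_add F G hF hG).sub
    (integrable_sq_cdf_sub_cdf_add G G hG hG)).congr (ae_of_all _ fun z => ?_)
  simp only [Pi.sub_apply]
  ring

theorem crpsBar_sub_crpsBar_self (hF : Integrable id F) (hG : Integrable id G) :
    crpsBar F G - crpsBar G G = ∫ z, (cdf F z - cdf G z) ^ 2 := by
  rw [crpsBar_eq_integral F G hF hG, crpsBar_eq_integral G G hG hG,
    ← integral_sub (integrable_sq_cdf_sub_cdf_add F G hF hG)
      (integrable_sq_cdf_sub_cdf_add G G hG hG)]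
  congr 1 with z
  ring

end

/-- The CRPS is a strictly proper scoring rule on `P₁(ℝ)`. -/
theorem crps_strictly_proper (F G : Measure ℝ)
    [IsProbabilityMeasure F] [IsProbabilityMeasure G]
    (hF : Integrable id F) (hG : Integrable id G) :
    crpsBar G G ≤ crpsBar F G ∧ (crpsBar F G = crpsBar G G ↔ F = G) := by
  have hgap := crpsBar_sub_crpsBar_self F G hF hG
  refine ⟨sub_nonneg.1 (hgap ▸ integral_nonneg fun z => sq_nonneg _), fun h => ?_,
    by rintro rfl; rfl⟩
  rw [← sub_eq_zero, hgap, integral_eq_zero_iff_of_nonneg (fun z => sq_nonneg _)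
    (integrable_sq_cdf_sub_cdf F G hF hG)] at h
  refine Measure.eq_of_cdf F G (StieltjesFunction.eq_of_ae_eq ?_)
  filter_upwards [h] with z hz
  simpa [sub_eq_zero] using hz
end

section
/- For any F ∈ P₁(ℝ) and y ∈ ℝ, the CRPS admits the kernel representation S(F,y) = E[|Z - y|] - (1/2) E[|Z' - Z|], where Z, Z' are independent random variables with distribution F. -/
open MeasureTheory ProbabilityTheory

namespace CRPSAux

open Set ENNReal

/-- Heaviside-type step function. -/
noncomputable def g (a z : ℝ) : ℝ := if a ≤ z then 1 else 0

lemma abs_g_sub_g (a b z : ℝ) :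
    |g a z - g b z| = (Ico (min a b) (max a b)).indicator (fun _ => (1 : ℝ)) z := by
  unfold g
  rw [Set.indicator_apply]
  rcases le_or_gt a z with ha | ha <;> rcases le_or_gt b z with hb | hb
  · have hm : z ∉ Ico (min a b) (max a b) := by
      rw [Set.mem_Ico]; push_neg; intro _; exact max_le ha hb
    rw [if_pos ha, if_pos hb, sub_self, abs_zero, if_neg hm]
  · have hm : z ∈ Ico (min a b) (max a b) :=
      ⟨min_le_iff.2 (Or.inl ha), lt_max_iff.2 (Or.inr hb)⟩
    rw [if_pos ha, if_neg (not_le.2 hb), sub_zero, abs_one, if_pos hm]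
  · have hm : z ∈ Ico (min a b) (max a b) :=
      ⟨min_le_iff.2 (Or.inr hb), lt_max_iff.2 (Or.inl ha)⟩
    rw [if_neg (not_le.2 ha), if_pos hb, zero_sub, abs_neg, abs_one, if_pos hm]
  · have hm : z ∉ Ico (min a b) (max a b) := fun h => absurd h.1 (not_le.2 (lt_min ha hb))
    rw [if_neg (not_le.2 ha), if_neg (not_le.2 hb), sub_self, abs_zero, if_neg hm]

lemma measurable_g2 : Measurable (fun p : ℝ × ℝ => g p.1 p.2) :=
  Measurable.ite (measurableSet_le measurable_fst measurable_snd) measurable_const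
    measurable_const

lemma measurable_g_left (a : ℝ) : Measurable (g a) := by
  unfold g
  exact Measurable.ite measurableSet_Ici measurable_const measurable_const

lemma lint_vol (a b : ℝ) :
    ∫⁻ z, ENNReal.ofReal |g a z - g b z| = ENNReal.ofReal |a - b| := by
  have h : ∀ z, ENNReal.ofReal |g a z - g b z|
      = (Ico (min a b) (max a b)).indicator (fun _ => (1 : ℝ≥0∞)) z := by
    intro z
    rw [abs_g_sub_g]
    by_cases hz : z ∈ Ico (min a b) (max a b) <;> simp [hz]
  simp_rw [h]
  rw [lintegral_indicator_const measurableSet_Ico, Real.volume_Ico, one_mul]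
  rw [abs_sub_comm]
  congr 1
  exact max_sub_min_eq_abs a b

lemma lint_F (F : Measure ℝ) [IsProbabilityMeasure F] (b z : ℝ) :
    ∫⁻ a, ENNReal.ofReal |g a z - g b z| ∂F
      = if b ≤ z then F (Ioi z) else F (Iic z) := by
  by_cases hb : b ≤ z
  · have h : ∀ a, ENNReal.ofReal |g a z - g b z|
        = (Ioi z).indicator (fun _ => (1 : ℝ≥0∞)) a := by
      intro a
      unfold g
      rw [if_pos hb]
      by_cases ha : a ≤ z <;>
        simp [ha, Set.indicator_apply, Set.mem_Ioi, not_le.mp, not_lt.mpr]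
    simp_rw [h]
    rw [lintegral_indicator_const measurableSet_Ioi, one_mul, if_pos hb]
  · have h : ∀ a, ENNReal.ofReal |g a z - g b z|
        = (Iic z).indicator (fun _ => (1 : ℝ≥0∞)) a := by
      intro a
      unfold g
      rw [if_neg hb]
      by_cases ha : a ≤ z <;> simp [ha, Set.indicator_apply, Set.mem_Iic]
    simp_rw [h]
    rw [lintegral_indicator_const measurableSet_Iic, one_mul, if_neg hb]

end CRPSAux

open CRPSAux Set ENNReal in
/-- Kernel representation of the CRPS: `S(F,y) = E|Z−y| − ½ E|Z'−Z|` with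
`Z, Z'` independent with distribution `F`. -/
theorem crps_kernel_representation (F : Measure ℝ) [IsProbabilityMeasure F]
    (hF : Integrable id F) (y : ℝ) :
    crps F y = (∫ z, |z - y| ∂F) - (1 / 2) * ∫ z, (∫ z', |z' - z| ∂F) ∂F := by
  -- basic measurability of z ↦ F (Iic z), z ↦ F (Ioi z)
  have meas_Iic : Measurable fun z : ℝ => F (Iic z) :=
    Monotone.measurable fun u v huv => measure_mono (Iic_subset_Iic.2 huv)
  have meas_Ioi : Measurable fun z : ℝ => F (Ioi z) :=
    Antitone.measurable fun u v huv => measure_mono (Ioi_subset_Ioi huv)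
  -- the three key functions of z
  set P : ℝ → ℝ≥0∞ :=
    fun z => ENNReal.ofReal (((if y ≤ z then (1 : ℝ) else 0) - cdf F z) ^ 2) with hP_def
  set Q : ℝ → ℝ≥0∞ := fun z => F (Iic z) * F (Ioi z) with hQ_def
  set R : ℝ → ℝ≥0∞ := fun z => if y ≤ z then F (Ioi z) else F (Iic z) with hR_def
  have hP_meas : Measurable P := by
    apply Measurable.ennreal_ofReal
    exact ((Measurable.ite measurableSet_Ici measurable_const
      measurable_const).sub (cdf F).mono.measurable).pow_const 2
  have hQ_meas : Measurable Q := meas_Iic.mul meas_Ioi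
  have hR_meas : Measurable R :=
    Measurable.ite measurableSet_Ici meas_Ioi meas_Iic
  -- expressing measures via cdf
  have hc0 : ∀ z, (0 : ℝ) ≤ cdf F z := fun z => cdf_nonneg F z
  have hc1 : ∀ z, cdf F z ≤ 1 := fun z => cdf_le_one F z
  have hIic : ∀ z, F (Iic z) = ENNReal.ofReal (cdf F z) := fun z => (ofReal_cdf F z).symm
  have hIoi : ∀ z, F (Ioi z) = ENNReal.ofReal (1 - cdf F z) := by
    intro z
    rw [← compl_Iic, prob_compl_eq_one_sub measurableSet_Iic, hIic,
      ← ENNReal.ofReal_one, ← ENNReal.ofReal_sub _ (hc0 z)]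
  -- key pointwise identity : P + Q = R
  have key : ∀ z, P z + Q z = R z := by
    intro z
    simp only [hP_def, hQ_def, hR_def, hIic, hIoi]
    rw [← ENNReal.ofReal_mul (hc0 z),
      ← ENNReal.ofReal_add (by positivity) (mul_nonneg (hc0 z) (by linarith [hc1 z]))]
    by_cases hy : y ≤ z
    · rw [if_pos hy, if_pos hy]; congr 1; ring
    · rw [if_neg hy, if_neg hy]; congr 1; ring
  -- integrability facts
  have hm_int : ∀ a : ℝ, Integrable (fun b => |b - a|) F := by
    intro a
    have : Integrable (fun b : ℝ => b - a) F := hF.sub (integrable_const a)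
    exact this.abs
  -- Step 1 : ∫⁻ R = ofReal (E|Z - y|)
  have step1 : ∫⁻ z, R z = ENNReal.ofReal (∫ z, |z - y| ∂F) := by
    have h1 : ∀ z, R z = ∫⁻ a, ENNReal.ofReal |g a z - g y z| ∂F :=
      fun z => (lint_F F y z).symm
    have hmeas : AEMeasurable
        (Function.uncurry fun (z a : ℝ) => ENNReal.ofReal |g a z - g y z|)
        ((volume : Measure ℝ).prod F) := by
      apply Measurable.aemeasurable
      apply Measurable.ennreal_ofReal
      exact ((measurable_g2.comp (measurable_snd.prodMk measurable_fst)).sub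
        ((measurable_g_left y).comp measurable_fst)).abs
    calc ∫⁻ z, R z = ∫⁻ z, ∫⁻ a, ENNReal.ofReal |g a z - g y z| ∂F :=
          lintegral_congr h1
      _ = ∫⁻ a, (∫⁻ z, ENNReal.ofReal |g a z - g y z| ∂volume) ∂F :=
          lintegral_lintegral_swap hmeas
      _ = ∫⁻ a, ENNReal.ofReal |a - y| ∂F :=
          lintegral_congr (μ := F) fun a => lint_vol a y
      _ = ENNReal.ofReal (∫ z, |z - y| ∂F) := by
          rw [ofReal_integral_eq_lintegral_ofReal (hm_int y)
            (Filter.Eventually.of_forall fun z => abs_nonneg _)]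
  -- Step 2 : ∫⁻ of the mean absolute difference = 2 * ∫⁻ Q
  have step2 : ∫⁻ a, ENNReal.ofReal (∫ z', |z' - a| ∂F) ∂F = 2 * ∫⁻ z, Q z := by
    have hmeas1 : ∀ a : ℝ, AEMeasurable
        (Function.uncurry fun (b z : ℝ) => ENNReal.ofReal |g a z - g b z|)
        (F.prod (volume : Measure ℝ)) := by
      intro a
      apply Measurable.aemeasurable
      apply Measurable.ennreal_ofReal
      exact (((measurable_g_left a).comp measurable_snd).sub
        (measurable_g2.comp (measurable_fst.prodMk measurable_snd))).abs
    have hmeas2 : AEMeasurable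
        (Function.uncurry fun (a z : ℝ) =>
          if a ≤ z then F (Ioi z) else F (Iic z)) (F.prod (volume : Measure ℝ)) := by
      apply Measurable.aemeasurable
      exact Measurable.ite (measurableSet_le measurable_fst measurable_snd)
        (meas_Ioi.comp measurable_snd) (meas_Iic.comp measurable_snd)
    calc ∫⁻ a, ENNReal.ofReal (∫ z', |z' - a| ∂F) ∂F
        = ∫⁻ a, ∫⁻ b, ENNReal.ofReal |b - a| ∂F ∂F := by
          refine lintegral_congr fun a => ?_
          rw [ofReal_integral_eq_lintegral_ofReal (hm_int a)
            (Filter.Eventually.of_forall fun z => abs_nonneg _)]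
      _ = ∫⁻ a, (∫⁻ b, (∫⁻ z, ENNReal.ofReal |g a z - g b z| ∂volume) ∂F) ∂F := by
          refine lintegral_congr (μ := F) fun a => lintegral_congr (μ := F) fun b => ?_
          rw [lint_vol a b, abs_sub_comm]
      _ = ∫⁻ a, (∫⁻ z, (∫⁻ b, ENNReal.ofReal |g a z - g b z| ∂F) ∂volume) ∂F := by
          exact lintegral_congr (μ := F) fun a => lintegral_lintegral_swap (hmeas1 a)
      _ = ∫⁻ a, (∫⁻ z, (if a ≤ z then F (Ioi z) else F (Iic z)) ∂volume) ∂F := by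
          refine lintegral_congr (μ := F) fun a => lintegral_congr (μ := volume) fun z => ?_
          simp_rw [abs_sub_comm (g a z)]
          exact lint_F F a z
      _ = ∫⁻ z, (∫⁻ a, (if a ≤ z then F (Ioi z) else F (Iic z)) ∂F) ∂volume := by
          exact lintegral_lintegral_swap hmeas2
      _ = ∫⁻ z, 2 * Q z ∂volume := by
          refine lintegral_congr (μ := volume) fun z => ?_
          have h : ∀ a : ℝ, (if a ≤ z then F (Ioi z) else F (Iic z))
              = (Iic z).indicator (fun _ => F (Ioi z)) a
                + (Ioi z).indicator (fun _ => F (Iic z)) a := by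
            intro a
            by_cases ha : a ≤ z <;>
              simp [ha, Set.indicator_apply, Set.mem_Iic, Set.mem_Ioi, not_le.mp]
          simp_rw [h]
          rw [lintegral_add_left (measurable_const.indicator measurableSet_Iic),
            lintegral_indicator_const measurableSet_Iic,
            lintegral_indicator_const measurableSet_Ioi]
          simp only [hQ_def]
          rw [two_mul, mul_comm]
      _ = 2 * ∫⁻ z, Q z := lintegral_const_mul 2 hQ_meas
  -- finiteness
  have hRfin : ∫⁻ z, R z ≠ ⊤ := by rw [step1]; exact ENNReal.ofReal_ne_top
  have hQleR : ∫⁻ z, Q z ≤ ∫⁻ z, R z :=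
    lintegral_mono fun z => (key z) ▸ le_add_self
  have hPleR : ∫⁻ z, P z ≤ ∫⁻ z, R z :=
    lintegral_mono fun z => (key z) ▸ le_self_add
  have hQfin : ∫⁻ z, Q z ≠ ⊤ := ne_top_of_le_ne_top hRfin hQleR
  have hPfin : ∫⁻ z, P z ≠ ⊤ := ne_top_of_le_ne_top hRfin hPleR
  have hsum : (∫⁻ z, P z) + ∫⁻ z, Q z = ∫⁻ z, R z := by
    rw [← lintegral_add_left hP_meas]
    exact lintegral_congr key
  -- express crps as toReal of ∫⁻ P
  have hcrps : crps F y = (∫⁻ z, P z).toReal := by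
    unfold crps
    rw [integral_eq_lintegral_of_nonneg_ae
      (Filter.Eventually.of_forall fun z => sq_nonneg _)]
    exact (((Measurable.ite measurableSet_Ici measurable_const
      measurable_const).sub (cdf F).mono.measurable).pow_const 2).aestronglyMeasurable
  -- the first integral
  have hA : ∫ z, |z - y| ∂F = (∫⁻ z, R z).toReal := by
    rw [step1, ENNReal.toReal_ofReal (integral_nonneg fun z => abs_nonneg _)]
  -- the mean absolute difference: continuity of m
  set m : ℝ → ℝ := fun z => ∫ z', |z' - z| ∂F with hm_def
  have hm_cont : Continuous m := by
    have hlip : LipschitzWith 1 m := by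
      apply LipschitzWith.of_dist_le_mul
      intro z1 z2
      rw [Real.dist_eq, Real.dist_eq, NNReal.coe_one, one_mul]
      have h1 : m z1 - m z2 = ∫ b, (|b - z1| - |b - z2|) ∂F :=
        (integral_sub (hm_int z1) (hm_int z2)).symm
      calc |m z1 - m z2| = |∫ b, (|b - z1| - |b - z2|) ∂F| := by rw [h1]
        _ ≤ ∫ b, |(|b - z1| - |b - z2|)| ∂F := by
            simpa [Real.norm_eq_abs] using
              norm_integral_le_integral_norm (fun b => |b - z1| - |b - z2|) (μ := F)
        _ ≤ ∫ _b, |z1 - z2| ∂F := by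
            refine integral_mono ((hm_int z1).sub (hm_int z2)).abs (integrable_const _)
              fun b => ?_
            calc |(|b - z1| - |b - z2|)| ≤ |(b - z1) - (b - z2)| :=
                  abs_abs_sub_abs_le_abs_sub _ _
              _ = |z1 - z2| := by rw [abs_sub_comm]; congr 1; ring
        _ = |z1 - z2| := by simp
    exact hlip.continuous
  have hB : ∫ z, m z ∂F = 2 * (∫⁻ z, Q z).toReal := by
    rw [integral_eq_lintegral_of_nonneg_ae
      (Filter.Eventually.of_forall fun z => integral_nonneg fun b => abs_nonneg _)
      hm_cont.aestronglyMeasurable]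
    rw [show (fun z => ENNReal.ofReal (m z)) = fun a => ENNReal.ofReal (∫ z', |z' - a| ∂F)
      from rfl, step2, ENNReal.toReal_mul]
    norm_num
  -- assemble
  have htoReal : (∫⁻ z, R z).toReal = (∫⁻ z, P z).toReal + (∫⁻ z, Q z).toReal := by
    rw [← hsum, ENNReal.toReal_add hPfin hQfin]
  rw [hcrps, hA, show (∫ z, (∫ z', |z' - z| ∂F) ∂F) = ∫ z, m z ∂F from rfl, hB]
  linarith
end

section
/- If X is a random variable taking values in [a,b] almost surely, then X is β-sub-Gaussian with β = (b - a)/2. -/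
open MeasureTheory

/-- `X` is `β`-sub-Gaussian: `E[exp(λ(X − E X))] ≤ exp(λ²β²/2)` for all `λ ∈ ℝ`. -/
def IsSubGaussian {Ω : Type*} [MeasurableSpace Ω] (P : MeasureTheory.Measure Ω)
    (X : Ω → ℝ) (β : ℝ) : Prop :=
  ∀ l : ℝ, (∫ ω, Real.exp (l * (X ω - ∫ ω₀, X ω₀ ∂P)) ∂P) ≤ Real.exp (l ^ 2 * β ^ 2 / 2)

open ProbabilityTheory

lemma isSubGaussian_of_hasSubgaussianMGF {Ω : Type*} [MeasurableSpace Ω] {P : Measure Ω}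
    {X : Ω → ℝ} {β : ℝ} (h : HasSubgaussianMGF (fun ω ↦ X ω - P[X]) (‖β‖₊ ^ 2) P) :
    IsSubGaussian P X β := by
  intro l
  calc (∫ ω, Real.exp (l * (X ω - P[X])) ∂P) = mgf (fun ω ↦ X ω - P[X]) P l := rfl
    _ ≤ Real.exp ((‖β‖₊ ^ 2 : NNReal) * l ^ 2 / 2) := h.mgf_le l
    _ = Real.exp (l ^ 2 * β ^ 2 / 2) := by simp [mul_comm]

/-- A random variable taking values in `[a,b]` a.s. is `(b−a)/2`-sub-Gaussian. -/
theorem isSubGaussian_of_mem_Icc {Ω : Type*} [MeasurableSpace Ω] (P : Measure Ω)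
    [IsProbabilityMeasure P] (X : Ω → ℝ) (hXm : Measurable X) (a b : ℝ)
    (hab : ∀ᵐ ω ∂P, X ω ∈ Set.Icc a b) :
    IsSubGaussian P X ((b - a) / 2) := by
  apply isSubGaussian_of_hasSubgaussianMGF
  simpa [nnnorm_div] using hasSubgaussianMGF_of_mem_Icc hXm.aemeasurable hab
end
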